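/- arXiv:1109.2359 — 2 statements merged into one kernel-verified Lean document; each statement's English description precedes it below -/
import Mathlib

section
/- For weight vectors ω, χ : Fin (n+1) → ℕ with positive coordinates, there is a unique continuous map e(χ/ω) : P(ω) → P(χ) such that for every z ∈ S^{2n+1} one has e(χ/ω)([z]_ω) = [N_χ(v)]_χ, where v = (z_0^{d_0}, …, z_n^{d_n}) and d_i = s(χ,ω)·χ_i/ω_i; in particular v ≠ 0, and the right-hand side is independent of the chosen representative z of the class [z]_ω. -/
noncomputable section

/-- The unit sphere in `ℂ^m` (the sphere `S^{2m-1}`). -/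
abbrev Sph (m : ℕ) : Type := {z : Fin m → ℂ // ∑ i, ‖z i‖ ^ 2 = 1}

/-- The relation on the sphere whose quotient is the weighted projective space `P(χ)`:
`z ∼ w` iff `w = t ·_χ z` for some unimodular `t`. -/
def wRel (m : ℕ) (χ : Fin m → ℕ) (z w : Sph m) : Prop :=
  ∃ t : ℂ, ‖t‖ = 1 ∧ ∀ i, (w : Fin m → ℂ) i = t ^ χ i * (z : Fin m → ℂ) i

/-- The weighted projective space `P(χ)`, with the quotient topology. -/
abbrev WP (m : ℕ) (χ : Fin m → ℕ) : Type := Quot (wRel m χ)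

/-- The class `[z]_χ` of a point of the sphere in `P(χ)`. -/
def wpMk (m : ℕ) (χ : Fin m → ℕ) (z : Sph m) : WP m χ := Quot.mk _ z

/-- `s(χ,ω)`: the least positive integer `s` with `ω i ∣ s * χ i` for all `i`. -/
def sVal (m : ℕ) (χ ω : Fin m → ℕ) : ℕ := sInf {s : ℕ | 0 < s ∧ ∀ i, ω i ∣ s * χ i}

/-- The exponents `d i = s(χ,ω)·χ i/ω i` of the map `e(χ/ω)`. -/
def dExp (m : ℕ) (χ ω : Fin m → ℕ) (i : Fin m) : ℕ := sVal m χ ω * χ i / ω i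

/-- `IsNorm m χ v w` says that `w` is the normalisation `N_χ(v)`, i.e. `w` lies on the
sphere and has the form `(λ^{χ_0} v_0, …)` for some real `λ > 0`. -/
def IsNorm (m : ℕ) (χ : Fin m → ℕ) (v : Fin m → ℂ) (w : Sph m) : Prop :=
  ∃ l : ℝ, 0 < l ∧ ∀ i, (w : Fin m → ℂ) i = (l : ℂ) ^ χ i * v i

/-- Coordinatewise powers of a point of the sphere. -/
def powVec (m : ℕ) (d : Fin m → ℕ) (z : Sph m) : Fin m → ℂ :=
  fun i => (z : Fin m → ℂ) i ^ d i

/-- `IsEMap m χ ω e` says that `e` is the canonical map `e(χ/ω) : P(ω) → P(χ)`: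
it is continuous and sends `[z]_ω` to `[N_χ(z_0^{d_0}, …, z_n^{d_n})]_χ`. -/
def IsEMap (m : ℕ) (χ ω : Fin m → ℕ) (e : WP m ω → WP m χ) : Prop :=
  Continuous e ∧ ∀ z w : Sph m,
    IsNorm m χ (powVec m (dExp m χ ω) z) w → e (wpMk m ω z) = wpMk m χ w

/-! For `v ≠ 0` the function `F(λ) = ∑ (λ^{χ_i} ‖v_i‖)²` increases strictly and continuously
from `0` to `∞` on `[0, ∞)`, so `N_χ(v) = (λ^{χ_i} v_i)` with `λ` the root of `F(λ) = 1`; this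
root depends continuously on `v`, since `F` is jointly continuous and monotone in `λ`.
As `ω_i d_i = s χ_i`, replacing `z` by `t ·_ω z` replaces `v` by `t^s ·_χ v`, which leaves `F`
and hence `λ` unchanged, so `N_χ(v)` is replaced by `t^s ·_χ N_χ(v)`. Thus
`z ↦ [N_χ(z^d)]_χ` descends to a continuous map on `P(ω)`, unique since `[·]_ω` is onto. -/

open Filter Topology Set

section WeightedNormalization

variable {m : ℕ} (χ : Fin m → ℕ)

def weightedNormSq (v : Fin m → ℂ) (l : ℝ) : ℝ :=
  ∑ i, (l ^ χ i * ‖v i‖) ^ 2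

lemma sum_norm_sq_eq_weightedNormSq (v : Fin m → ℂ) {l : ℝ} (hl : 0 ≤ l) :
    ∑ i, ‖(l : ℂ) ^ χ i * v i‖ ^ 2 = weightedNormSq χ v l := by
  simp only [weightedNormSq, norm_mul, norm_pow, Complex.norm_real, Real.norm_of_nonneg hl]

lemma continuous_weightedNormSq :
    Continuous fun p : (Fin m → ℂ) × ℝ => weightedNormSq χ p.1 p.2 := by
  unfold weightedNormSq
  fun_prop

lemma weightedNormSq_zero (hχ : ∀ i, 1 ≤ χ i) (v : Fin m → ℂ) : weightedNormSq χ v 0 = 0 :=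
  Finset.sum_eq_zero fun i _ => by simp [zero_pow (Nat.one_le_iff_ne_zero.mp (hχ i))]

lemma monotoneOn_weightedNormSq (v : Fin m → ℂ) : MonotoneOn (weightedNormSq χ v) (Ici 0) :=
  fun a (_ : 0 ≤ a) _ _ _ => Finset.sum_le_sum fun _ _ => by gcongr

lemma strictMonoOn_weightedNormSq (hχ : ∀ i, 1 ≤ χ i) {v : Fin m → ℂ} (hv : v ≠ 0) :
    StrictMonoOn (weightedNormSq χ v) (Ici 0) := by
  obtain ⟨j, hj⟩ := Function.ne_iff.mp hv
  intro a (_ : 0 ≤ a) b _ hab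
  refine Finset.sum_lt_sum (fun i _ => ?_) ⟨j, Finset.mem_univ j, ?_⟩
  · gcongr
  · have := norm_pos_iff.mpr hj
    have := Nat.one_le_iff_ne_zero.mp (hχ j)
    gcongr

lemma tendsto_weightedNormSq_atTop (hχ : ∀ i, 1 ≤ χ i) {v : Fin m → ℂ} (hv : v ≠ 0) :
    Tendsto (weightedNormSq χ v) atTop atTop := by
  obtain ⟨j, hj⟩ := Function.ne_iff.mp hv
  have hterm : Tendsto (fun l : ℝ => (l ^ χ j * ‖v j‖) ^ 2) atTop atTop :=
    (tendsto_pow_atTop two_ne_zero).comp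
      ((tendsto_pow_atTop (Nat.one_le_iff_ne_zero.mp (hχ j))).atTop_mul_const
        (norm_pos_iff.mpr hj))
  exact tendsto_atTop_mono (fun l => Finset.single_le_sum (f := fun i => (l ^ χ i * ‖v i‖) ^ 2)
    (fun i _ => sq_nonneg _) (Finset.mem_univ j)) hterm

lemma exists_weightedNormSq_eq_one (hχ : ∀ i, 1 ≤ χ i) {v : Fin m → ℂ} (hv : v ≠ 0) :
    ∃ l, 0 < l ∧ weightedNormSq χ v l = 1 := by
  have hone : (1 : ℝ) ∈ Ici (weightedNormSq χ v 0) := by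
    simp [weightedNormSq_zero χ hχ]
  obtain ⟨l, hl, hl1⟩ := intermediate_value_Ici
    ((continuous_weightedNormSq χ).comp (Continuous.prodMk_right v)).continuousOn
    (tendsto_weightedNormSq_atTop χ hχ hv) hone
  refine ⟨l, lt_of_le_of_ne hl ?_, hl1⟩
  rintro rfl
  simp [weightedNormSq_zero χ hχ] at hl1

/-- The scale `λ` of the normalisation `N_χ(v)`; a junk value when `v = 0`. -/
def weightScale (v : Fin m → ℂ) : ℝ :=
  Classical.epsilon fun l => 0 < l ∧ weightedNormSq χ v l = 1

lemma weightScale_spec (hχ : ∀ i, 1 ≤ χ i) {v : Fin m → ℂ} (hv : v ≠ 0) :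
    0 < weightScale χ v ∧ weightedNormSq χ v (weightScale χ v) = 1 :=
  Classical.epsilon_spec (exists_weightedNormSq_eq_one χ hχ hv)

lemma eq_weightScale (hχ : ∀ i, 1 ≤ χ i) {v : Fin m → ℂ} (hv : v ≠ 0) {l : ℝ} (hl : 0 < l)
    (h : weightedNormSq χ v l = 1) : l = weightScale χ v :=
  (strictMonoOn_weightedNormSq χ hχ hv).injOn hl.le (weightScale_spec χ hχ hv).1.le
    (h.trans (weightScale_spec χ hχ hv).2.symm)

lemma continuousOn_weightScale (hχ : ∀ i, 1 ≤ χ i) :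
    ContinuousOn (weightScale χ) {v | v ≠ 0} := by
  intro v₀ (hv₀ : v₀ ≠ 0)
  have hne : ∀ᶠ v in 𝓝 v₀, v ≠ 0 := isOpen_ne.mem_nhds hv₀
  have hF (l : ℝ) : Tendsto (fun v => weightedNormSq χ v l) (𝓝 v₀)
      (𝓝 (weightedNormSq χ v₀ l)) :=
    ((continuous_weightedNormSq χ).comp (Continuous.prodMk_left l)).tendsto v₀
  obtain ⟨hpos₀, hone₀⟩ := weightScale_spec χ hχ hv₀
  -- The level set `{l | F(v, l) = 1}` is squeezed between levels `a < λ(v₀) < b`,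
  -- at which `F(v, ·)` stays below, resp. above, `1` for `v` near `v₀`.
  refine ContinuousAt.continuousWithinAt (tendsto_order.2 ⟨fun a ha => ?_, fun b hb => ?_⟩)
  · have hlt : weightedNormSq χ v₀ (max a 0) < 1 := hone₀ ▸
      strictMonoOn_weightedNormSq χ hχ hv₀ (le_max_right a 0) hpos₀.le (max_lt ha hpos₀)
    filter_upwards [hne, (hF _).eventually_lt_const hlt] with v hv hFv
    obtain ⟨hpos, hone⟩ := weightScale_spec χ hχ hv
    by_contra! hle
    exact (hone ▸ monotoneOn_weightedNormSq χ v hpos.le (le_max_right a 0)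
      (hle.trans (le_max_left a 0))).not_gt hFv
  · have hb₀ : 0 ≤ b := (hpos₀.trans hb).le
    have hgt : 1 < weightedNormSq χ v₀ b := hone₀ ▸
      strictMonoOn_weightedNormSq χ hχ hv₀ hpos₀.le hb₀ hb
    filter_upwards [hne, (hF b).eventually_const_lt hgt] with v hv hFv
    obtain ⟨hpos, hone⟩ := weightScale_spec χ hχ hv
    by_contra! hle
    exact (hone ▸ monotoneOn_weightedNormSq χ v hb₀ hpos.le hle).not_gt hFv

def weightNormalize (v : Fin m → ℂ) : Fin m → ℂ :=
  fun i => (weightScale χ v : ℂ) ^ χ i * v i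

lemma sum_norm_sq_weightNormalize (hχ : ∀ i, 1 ≤ χ i) {v : Fin m → ℂ} (hv : v ≠ 0) :
    ∑ i, ‖weightNormalize χ v i‖ ^ 2 = 1 := by
  obtain ⟨hpos, hone⟩ := weightScale_spec χ hχ hv
  rw [← hone, ← sum_norm_sq_eq_weightedNormSq χ v hpos.le]
  rfl

lemma isNorm_iff_eq_weightNormalize (hχ : ∀ i, 1 ≤ χ i) {v : Fin m → ℂ} (hv : v ≠ 0)
    (w : Sph m) : IsNorm m χ v w ↔ (w : Fin m → ℂ) = weightNormalize χ v := by
  constructor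
  · rintro ⟨l, hl, hw⟩
    have hone : weightedNormSq χ v l = 1 := by
      rw [← sum_norm_sq_eq_weightedNormSq χ v hl.le, ← w.2]
      simp only [hw]
    funext i
    rw [hw i, eq_weightScale χ hχ hv hl hone, weightNormalize]
  · intro hw
    exact ⟨weightScale χ v, (weightScale_spec χ hχ hv).1, fun i => congrFun hw i⟩

lemma continuousOn_weightNormalize (hχ : ∀ i, 1 ≤ χ i) :
    ContinuousOn (weightNormalize χ) {v | v ≠ 0} :=
  continuousOn_pi.2 fun i =>
    ((Complex.continuous_ofReal.comp_continuousOn (continuousOn_weightScale χ hχ)).pow _).mul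
      (continuous_apply i).continuousOn

lemma weightNormalize_smul {u : ℂ} (hu : ‖u‖ = 1) (v : Fin m → ℂ) :
    weightNormalize χ (fun i => u ^ χ i * v i) = fun i => u ^ χ i * weightNormalize χ v i := by
  have hscale : weightScale χ (fun i => u ^ χ i * v i) = weightScale χ v := by
    simp only [weightScale, weightedNormSq, norm_mul, norm_pow, hu, one_pow, one_mul]
  funext i
  simp only [weightNormalize, hscale]
  ring

end WeightedNormalization

lemma mul_dExp {m : ℕ} (χ : Fin m → ℕ) {ω : Fin m → ℕ} (hω : ∀ i, 1 ≤ ω i) (i : Fin m) :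
    ω i * dExp m χ ω i = sVal m χ ω * χ i := by
  have hne : {s : ℕ | 0 < s ∧ ∀ i, ω i ∣ s * χ i}.Nonempty :=
    ⟨∏ i, ω i, Finset.prod_pos fun i _ => hω i,
      fun i => dvd_mul_of_dvd_left (Finset.dvd_prod_of_mem ω (Finset.mem_univ i)) _⟩
  exact Nat.mul_div_cancel' ((Nat.sInf_mem hne).2 i)

section Sphere

variable {m : ℕ}

lemma Sph.coe_ne_zero (z : Sph m) : (z : Fin m → ℂ) ≠ 0 := by
  intro h
  simpa [h] using z.2

lemma powVec_ne_zero (d : Fin m → ℕ) (z : Sph m) : powVec m d z ≠ 0 := by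
  obtain ⟨j, hj⟩ := Function.ne_iff.mp z.coe_ne_zero
  exact Function.ne_iff.mpr ⟨j, pow_ne_zero _ hj⟩

lemma continuous_powVec (d : Fin m → ℕ) : Continuous (powVec m d) :=
  continuous_pi fun i => ((continuous_apply i).comp continuous_subtype_val).pow (d i)

lemma powVec_of_wRel {ω χ d : Fin m → ℕ} {s : ℕ} (hd : ∀ i, ω i * d i = s * χ i)
    {z z' : Sph m} (h : wRel m ω z z') :
    ∃ u : ℂ, ‖u‖ = 1 ∧ powVec m d z' = fun i => u ^ χ i * powVec m d z i := by
  obtain ⟨t, ht, hz⟩ := h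
  refine ⟨t ^ s, by rw [norm_pow, ht, one_pow], funext fun i => ?_⟩
  rw [powVec, powVec, hz i, mul_pow, ← pow_mul, ← pow_mul, hd i, mul_comm s]

variable (χ : Fin m → ℕ) (hχ : ∀ i, 1 ≤ χ i) (d : Fin m → ℕ)

def powNormalize (z : Sph m) : Sph m :=
  ⟨weightNormalize χ (powVec m d z), sum_norm_sq_weightNormalize χ hχ (powVec_ne_zero d z)⟩

lemma continuous_powNormalize : Continuous (powNormalize χ hχ d) :=
  ((continuousOn_weightNormalize χ hχ).comp_continuous (continuous_powVec d)
    (powVec_ne_zero d)).subtype_mk _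

lemma isNorm_iff_eq_powNormalize (z w : Sph m) :
    IsNorm m χ (powVec m d z) w ↔ w = powNormalize χ hχ d z := by
  rw [isNorm_iff_eq_weightNormalize χ hχ (powVec_ne_zero d z), Subtype.ext_iff]
  rfl

lemma wRel_powNormalize {ω : Fin m → ℕ} {s : ℕ} (hd : ∀ i, ω i * d i = s * χ i)
    {z z' : Sph m} (h : wRel m ω z z') :
    wRel m χ (powNormalize χ hχ d z) (powNormalize χ hχ d z') := by
  obtain ⟨u, hu, hv⟩ := powVec_of_wRel hd h
  refine ⟨u, hu, fun i => ?_⟩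
  simp only [powNormalize, hv, weightNormalize_smul χ hu]

end Sphere

theorem statement0_general (n : ℕ) (ω χ : Fin (n + 1) → ℕ)
    (hω : ∀ i, 1 ≤ ω i) (hχ : ∀ i, 1 ≤ χ i) :
    (∀ z : Sph (n + 1), powVec (n + 1) (dExp (n + 1) χ ω) z ≠ 0) ∧
    (∀ z : Sph (n + 1), ∃ w : Sph (n + 1),
      IsNorm (n + 1) χ (powVec (n + 1) (dExp (n + 1) χ ω) z) w) ∧
    (∃! e : WP (n + 1) ω → WP (n + 1) χ, IsEMap (n + 1) χ ω e) := by
  set f := powNormalize χ hχ (dExp (n + 1) χ ω)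
  have hf (z : Sph (n + 1)) : IsNorm (n + 1) χ (powVec (n + 1) (dExp (n + 1) χ ω) z) (f z) :=
    (isNorm_iff_eq_powNormalize χ hχ _ z _).2 rfl
  let e : WP (n + 1) ω → WP (n + 1) χ := Quot.lift (wpMk (n + 1) χ ∘ f) fun _ _ h =>
    Quot.sound (wRel_powNormalize χ hχ _ (mul_dExp χ hω) h)
  have he : IsEMap (n + 1) χ ω e := by
    refine ⟨continuous_quot_lift _ (continuous_quot_mk.comp (continuous_powNormalize χ hχ _)),
      fun z w hw => ?_⟩
    rw [(isNorm_iff_eq_powNormalize χ hχ _ z w).1 hw]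
    rfl
  refine ⟨powVec_ne_zero _, fun z => ⟨f z, hf z⟩, e, he, fun e' he' => funext ?_⟩
  exact Quot.ind fun z => (he'.2 z (f z) (hf z)).trans (he.2 z (f z) (hf z)).symm

/-- For weight vectors `ω, χ` with positive coordinates there is a unique
continuous map `e(χ/ω) : P(ω) → P(χ)` with `e(χ/ω)([z]_ω) = [N_χ(v)]_χ`, where
`v = (z_0^{d_0}, …, z_n^{d_n})` and `d_i = s(χ,ω)·χ_i/ω_i`; in particular `v ≠ 0` (so its
normalisation exists), and the right-hand side is independent of the representative `z`. -/
theorem statement0 (n : ℕ) (hn : 1 ≤ n) (ω χ : Fin (n + 1) → ℕ)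
    (hω : ∀ i, 1 ≤ ω i) (hχ : ∀ i, 1 ≤ χ i) :
    (∀ z : Sph (n + 1), powVec (n + 1) (dExp (n + 1) χ ω) z ≠ 0) ∧
    (∀ z : Sph (n + 1), ∃ w : Sph (n + 1),
      IsNorm (n + 1) χ (powVec (n + 1) (dExp (n + 1) χ ω) z) w) ∧
    (∃! e : WP (n + 1) ω → WP (n + 1) χ, IsEMap (n + 1) χ ω e) :=
  statement0_general n ω χ hω hχ
end
end

section
/- For weight vectors ω, χ : Fin (n+1) → ℕ with positive coordinates, the map e(χ/ω) : P(ω) → P(χ) is surjective, and for x, y ∈ P(ω) one has e(χ/ω)(x) = e(χ/ω)(y) if and only if y = g·x for some g in the finite abelian group C_{χ/ω}; consequently e(χ/ω) induces a homeomorphism from the orbit space P(ω)/C_{χ/ω} (with the quotient topology) onto P(χ). -/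
/-!
Raising the coordinates to the powers `d_i` and renormalising is a continuous self-map of the
sphere lifting `e(χ/ω)`; it is onto, since a preimage of `w` is the `ω`-normalisation of any
vector of `d_i`-th roots of the `w_i`. Because `d_i ω_i = s χ_i`, an `s`-th root `τ` of the ratio
of two normalisations converts the `χ`-action on images into the `ω`-action on preimages, up to
`d_i`-th roots of unity, and comparing norms on the sphere forces `|τ| = 1`. The sphere is
compact, so the lift is a closed map and `e(χ/ω)` is a quotient map whose fibres are the
`C_{χ/ω}`-orbits.
-/

noncomputable section

/-- `orbRel m ω d x y` says `y = g·x` for some `g` in the finite abelian group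
`C = ∏_i μ_{d i}` acting coordinatewise on `P(ω)`. -/
def orbRel (m : ℕ) (ω : Fin m → ℕ) (d : Fin m → ℕ) (x y : WP m ω) : Prop :=
  ∃ g : Fin m → ℂ, (∀ i, g i ^ d i = 1) ∧
    ∃ z w : Sph m, x = wpMk m ω z ∧ y = wpMk m ω w ∧
      ∀ i, (w : Fin m → ℂ) i = g i * (z : Fin m → ℂ) i

open Set Topology

namespace WeightedProjective

variable {m : ℕ}

section Normalization

variable (χ : Fin m → ℕ)

def weightedNormSq (v : Fin m → ℂ) (l : ℝ) : ℝ :=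
  ∑ i, ‖(l : ℂ) ^ χ i * v i‖ ^ 2

lemma weightedNormSq_eq (v : Fin m → ℂ) (l : ℝ) :
    weightedNormSq χ v l = ∑ i, (l ^ 2) ^ χ i * ‖v i‖ ^ 2 := by
  refine Finset.sum_congr rfl fun i _ => ?_
  rw [norm_mul, norm_pow, Complex.norm_real, Real.norm_eq_abs, mul_pow, pow_right_comm, sq_abs]

lemma continuous_weightedNormSq {X : Type*} [TopologicalSpace X] {f : X → Fin m → ℂ} {g : X → ℝ}
    (hf : Continuous f) (hg : Continuous g) : Continuous fun x => weightedNormSq χ (f x) (g x) := by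
  unfold weightedNormSq
  fun_prop

lemma weightedNormSq_one (z : Sph m) : weightedNormSq χ z 1 = 1 := by
  simpa [weightedNormSq] using z.2

variable {χ} (hχ : ∀ i, 1 ≤ χ i)
include hχ

lemma weightedNormSq_zero (v : Fin m → ℂ) : weightedNormSq χ v 0 = 0 := by
  simp [weightedNormSq, zero_pow (Nat.one_le_iff_ne_zero.mp (hχ _))]

lemma strictMonoOn_weightedNormSq {v : Fin m → ℂ} (hv : v ≠ 0) :
    StrictMonoOn (weightedNormSq χ v) (Ici 0) := by
  intro a ha b hb hab
  obtain ⟨j, hj⟩ := Function.ne_iff.mp hv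
  have hsq : a ^ 2 < b ^ 2 := pow_lt_pow_left₀ hab ha two_ne_zero
  simp only [weightedNormSq_eq]
  refine Finset.sum_lt_sum (fun i _ => ?_) ⟨j, Finset.mem_univ j, ?_⟩
  · gcongr
  · have : (a ^ 2) ^ χ j < (b ^ 2) ^ χ j :=
      pow_lt_pow_left₀ hsq (by positivity) (Nat.one_le_iff_ne_zero.mp (hχ j))
    gcongr

lemma exists_weightedNormSq_eq_one {v : Fin m → ℂ} (hv : v ≠ 0) :
    ∃ l, 0 < l ∧ weightedNormSq χ v l = 1 := by
  obtain ⟨j, hj⟩ := Function.ne_iff.mp hv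
  set c := ‖v j‖ ^ 2
  have hc : 0 < c := by positivity
  set L := 1 + 1 / c
  have hL : 1 ≤ L := by simp only [L]; linarith [one_div_pos.mpr hc]
  have hcont : Continuous (weightedNormSq χ v) :=
    continuous_weightedNormSq χ continuous_const continuous_id
  -- `L = 1 + 1/c` is large enough for the `j`-th summand alone to reach `1`
  have hgeL : 1 ≤ weightedNormSq χ v L := calc
    (1 : ℝ) ≤ L * c := by simp only [L]; rw [add_mul, one_div_mul_cancel hc.ne']; linarith
    _ ≤ (L ^ 2) ^ χ j * c := by
      gcongr
      calc L ≤ L ^ 2 := by nlinarith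
        _ ≤ (L ^ 2) ^ χ j := le_self_pow₀ (by nlinarith) (Nat.one_le_iff_ne_zero.mp (hχ j))
    _ ≤ weightedNormSq χ v L := by
      rw [weightedNormSq_eq]
      exact Finset.single_le_sum (f := fun i => (L ^ 2) ^ χ i * ‖v i‖ ^ 2)
        (fun i _ => by positivity) (Finset.mem_univ j)
  obtain ⟨l, hl, hl1⟩ := intermediate_value_Icc (zero_le_one.trans hL) hcont.continuousOn
    ⟨(weightedNormSq_zero hχ v).le.trans zero_le_one, hgeL⟩
  refine ⟨l, hl.1.lt_of_ne ?_, hl1⟩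
  rintro rfl
  simp [weightedNormSq_zero hχ] at hl1

omit hχ in
variable (χ) in
/-- The scale `λ` of `N_χ(v)` (junk for `v = 0`). -/
def normScale (v : Fin m → ℂ) : ℝ :=
  Classical.epsilon fun l => 0 < l ∧ weightedNormSq χ v l = 1

lemma normScale_spec {v : Fin m → ℂ} (hv : v ≠ 0) :
    0 < normScale χ v ∧ weightedNormSq χ v (normScale χ v) = 1 :=
  Classical.epsilon_spec (exists_weightedNormSq_eq_one hχ hv)

lemma eq_normScale {v : Fin m → ℂ} (hv : v ≠ 0) {l : ℝ} (hl : 0 ≤ l)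
    (h : weightedNormSq χ v l = 1) : l = normScale χ v :=
  (strictMonoOn_weightedNormSq hχ hv).injOn hl (normScale_spec hχ hv).1.le
    (h.trans (normScale_spec hχ hv).2.symm)

lemma lt_normScale_iff {v : Fin m → ℂ} (hv : v ≠ 0) {a : ℝ} (ha : 0 ≤ a) :
    a < normScale χ v ↔ weightedNormSq χ v a < 1 := by
  conv_rhs => rw [← (normScale_spec hχ hv).2]
  exact ((strictMonoOn_weightedNormSq hχ hv).lt_iff_lt ha (normScale_spec hχ hv).1.le).symm

lemma normScale_lt_iff {v : Fin m → ℂ} (hv : v ≠ 0) {b : ℝ} (hb : 0 ≤ b) :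
    normScale χ v < b ↔ 1 < weightedNormSq χ v b := by
  conv_rhs => rw [← (normScale_spec hχ hv).2]
  exact ((strictMonoOn_weightedNormSq hχ hv).lt_iff_lt (normScale_spec hχ hv).1.le hb).symm

lemma continuous_normScale {X : Type*} [TopologicalSpace X] {f : X → Fin m → ℂ}
    (hf : Continuous f) (hf0 : ∀ x, f x ≠ 0) : Continuous fun x => normScale χ (f x) := by
  have hG (a : ℝ) : Continuous fun x => weightedNormSq χ (f x) a :=
    continuous_weightedNormSq χ hf continuous_const
  refine OrderTopology.continuous_iff.mpr fun a => ⟨?_, ?_⟩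
  · rcases lt_or_ge a 0 with ha | ha
    · have : (fun x => normScale χ (f x)) ⁻¹' Ioi a = univ :=
        eq_univ_of_forall fun x => ha.trans (normScale_spec hχ (hf0 x)).1
      exact this ▸ isOpen_univ
    · have : (fun x => normScale χ (f x)) ⁻¹' Ioi a = {x | weightedNormSq χ (f x) a < 1} :=
        ext fun x => lt_normScale_iff hχ (hf0 x) ha
      exact this ▸ isOpen_lt (hG a) continuous_const
  · rcases lt_or_ge a 0 with ha | ha
    · have : (fun x => normScale χ (f x)) ⁻¹' Iio a = ∅ :=
        eq_empty_of_forall_notMem fun x hx =>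
          (normScale_spec hχ (hf0 x)).1.not_gt (lt_trans hx ha)
      exact this ▸ isOpen_empty
    · have : (fun x => normScale χ (f x)) ⁻¹' Iio a = {x | 1 < weightedNormSq χ (f x) a} :=
        ext fun x => normScale_lt_iff hχ (hf0 x) ha
      exact this ▸ isOpen_lt continuous_const (hG a)

lemma isNorm_iff {v : Fin m → ℂ} (hv : v ≠ 0) {w : Sph m} :
    IsNorm m χ v w ↔ ∀ i, (w : Fin m → ℂ) i = (normScale χ v : ℂ) ^ χ i * v i := by
  refine ⟨fun ⟨l, hl, hw⟩ => ?_, fun hw => ⟨_, (normScale_spec hχ hv).1, hw⟩⟩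
  have hl1 : weightedNormSq χ v l = 1 := by
    simpa [weightedNormSq, ← hw] using w.2
  simpa [← eq_normScale hχ hv hl.le hl1] using hw

lemma exists_isNorm {v : Fin m → ℂ} (hv : v ≠ 0) : ∃ w, IsNorm m χ v w :=
  ⟨⟨_, (normScale_spec hχ hv).2⟩, (isNorm_iff hχ hv).mpr fun _ => rfl⟩

lemma IsNorm.unique {v : Fin m → ℂ} (hv : v ≠ 0) {w w' : Sph m} (h : IsNorm m χ v w)
    (h' : IsNorm m χ v w') : w = w' := by
  rw [isNorm_iff hχ hv] at h h'
  exact Subtype.ext (funext fun i => (h i).trans (h' i).symm)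

end Normalization

lemma sph_coe_ne_zero (z : Sph m) : (z : Fin m → ℂ) ≠ 0 := by
  intro h
  simpa [h] using z.2

lemma powVec_ne_zero (d : Fin m → ℕ) (z : Sph m) : powVec m d z ≠ 0 := by
  obtain ⟨i, hi⟩ := Function.ne_iff.mp (sph_coe_ne_zero z)
  exact Function.ne_iff.mpr ⟨i, pow_ne_zero _ hi⟩

lemma wRel_equivalence (χ : Fin m → ℕ) : Equivalence (wRel m χ) where
  refl _ := by exact ⟨1, norm_one, fun _ => by rw [one_pow, one_mul]⟩
  symm := by
    rintro z w ⟨t, ht, hw⟩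
    have ht0 : t ≠ 0 := norm_ne_zero_iff.mp (ht ▸ one_ne_zero)
    refine ⟨t⁻¹, by rw [norm_inv, ht, inv_one], fun i => ?_⟩
    rw [hw i, ← mul_assoc, ← mul_pow, inv_mul_cancel₀ ht0, one_pow, one_mul]
  trans := by
    rintro z w u ⟨t, ht, hw⟩ ⟨t', ht', hu⟩
    refine ⟨t' * t, by rw [norm_mul, ht, ht', one_mul], fun i => ?_⟩
    rw [hu i, hw i, mul_pow, mul_assoc]

lemma wpMk_eq_iff {χ : Fin m → ℕ} {z w : Sph m} :
    wpMk m χ z = wpMk m χ w ↔ wRel m χ z w :=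
  Quot.eq.trans (wRel_equivalence χ).eqvGen_iff

lemma exists_continuous_isNorm_powVec {χ : Fin m → ℕ} (hχ : ∀ i, 1 ≤ χ i) (d : Fin m → ℕ) :
    ∃ φ : Sph m → Sph m, Continuous φ ∧ ∀ z, IsNorm m χ (powVec m d z) (φ z) := by
  have hv : Continuous fun z : Sph m => powVec m d z :=
    continuous_pi fun i => ((continuous_apply i).comp continuous_subtype_val).pow _
  have hl := continuous_normScale hχ hv (powVec_ne_zero d)
  refine ⟨fun z => ⟨_, (normScale_spec hχ (powVec_ne_zero d z)).2⟩, ?_,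
    fun z => (isNorm_iff hχ (powVec_ne_zero d z)).mpr fun _ => rfl⟩
  refine Continuous.subtype_mk (continuous_pi fun i => ?_) _
  exact ((Complex.continuous_ofReal.comp hl).pow _).mul ((continuous_apply i).comp hv)

section Exponents

variable {χ ω : Fin m → ℕ}

lemma sVal_pos_and_dvd (hω : ∀ i, 1 ≤ ω i) :
    0 < sVal m χ ω ∧ ∀ i, ω i ∣ sVal m χ ω * χ i :=
  Nat.sInf_mem (s := {s | 0 < s ∧ ∀ i, ω i ∣ s * χ i})
    ⟨∏ j, ω j, Finset.prod_pos fun j _ => hω j,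
      fun i => (Finset.dvd_prod_of_mem ω (Finset.mem_univ i)).mul_right _⟩

lemma dExp_mul (hω : ∀ i, 1 ≤ ω i) (i : Fin m) :
    dExp m χ ω i * ω i = sVal m χ ω * χ i :=
  Nat.div_mul_cancel ((sVal_pos_and_dvd hω).2 i)

lemma dExp_ne_zero (hω : ∀ i, 1 ≤ ω i) (hχ : ∀ i, 1 ≤ χ i) (i : Fin m) : dExp m χ ω i ≠ 0 := by
  intro h
  have := dExp_mul (χ := χ) hω i
  rw [h, zero_mul] at this
  exact (Nat.mul_pos (sVal_pos_and_dvd hω).1 (hχ i)).ne this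

end Exponents

section Fibres

variable {χ ω d : Fin m → ℕ} {s : ℕ}

lemma exists_isNorm_powVec (hω : ∀ i, 1 ≤ ω i) (hd : ∀ i, d i ≠ 0)
    (hds : ∀ i, d i * ω i = s * χ i) (w : Sph m) : ∃ z : Sph m, IsNorm m χ (powVec m d z) w := by
  choose c hc using fun i =>
    IsAlgClosed.exists_pow_nat_eq ((w : Fin m → ℂ) i) (Nat.pos_of_ne_zero (hd i))
  have hc0 : c ≠ 0 := by
    rintro rfl
    exact sph_coe_ne_zero w (funext fun i => by simp [← hc i, zero_pow (hd i)])
  obtain ⟨z, l, hl, hz⟩ := exists_isNorm hω hc0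
  -- `z_i ^ d_i = l ^ (ω_i d_i) w_i = (l ^ s) ^ χ_i w_i`
  refine ⟨z, (l ^ s)⁻¹, by positivity, fun i => ?_⟩
  have hzd : powVec m d z i = ((l ^ s : ℝ) : ℂ) ^ χ i * (w : Fin m → ℂ) i := by
    rw [powVec, hz i, mul_pow, ← pow_mul, hc i, mul_comm (ω i), hds i]
    push_cast
    ring
  rw [hzd, ← mul_assoc, ← mul_pow, ← Complex.ofReal_mul, inv_mul_cancel₀ (by positivity),
    Complex.ofReal_one, one_pow, one_mul]

lemma exists_pow_eq_one_mul_of_pow_eq_pow {G : Type*} [CommGroupWithZero G] {a b : G} {k : ℕ}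
    (hk : k ≠ 0) (h : a ^ k = b ^ k) : ∃ g : G, g ^ k = 1 ∧ a = g * b := by
  rcases eq_or_ne b 0 with rfl | hb
  · exact ⟨1, one_pow k, by rw [one_mul]; exact (pow_eq_zero_iff hk).mp (h.trans (zero_pow hk))⟩
  · exact ⟨a / b, by rw [div_pow, h, div_self (pow_ne_zero k hb)], (div_mul_cancel₀ a hb).symm⟩

lemma exists_pow_eq_of_isNorm_of_wRel {z z' w w' : Sph m}
    (hw : IsNorm m χ (powVec m d z) w) (hw' : IsNorm m χ (powVec m d z') w')
    (h : wRel m χ w w') :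
    ∃ u : ℂ, ∀ i, (z' : Fin m → ℂ) i ^ d i = u ^ χ i * (z : Fin m → ℂ) i ^ d i := by
  obtain ⟨l, -, hw⟩ := hw
  obtain ⟨l', hl', hw'⟩ := hw'
  obtain ⟨t, -, htw⟩ := h
  have hl'0 : (l' : ℂ) ≠ 0 := by exact_mod_cast hl'.ne'
  refine ⟨t * l / l', fun i => ?_⟩
  have hi := htw i
  rw [hw i, hw' i] at hi
  simp only [powVec] at hi
  rw [div_pow, mul_pow]
  field_simp
  linear_combination hi

lemma orbRel_of_pow_eq (hω : ∀ i, 1 ≤ ω i) (hd : ∀ i, d i ≠ 0) (hs : s ≠ 0)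
    (hds : ∀ i, d i * ω i = s * χ i) {z z' : Sph m} {u : ℂ}
    (h : ∀ i, (z' : Fin m → ℂ) i ^ d i = u ^ χ i * (z : Fin m → ℂ) i ^ d i) :
    orbRel m ω d (wpMk m ω z) (wpMk m ω z') := by
  obtain ⟨τ, hτ⟩ := IsAlgClosed.exists_pow_nat_eq u (Nat.pos_of_ne_zero hs)
  -- `(τ ^ ω_i) ^ d_i = τ ^ (s χ_i) = u ^ χ_i`
  have hpow (i : Fin m) : (z' : Fin m → ℂ) i ^ d i = (τ ^ ω i * (z : Fin m → ℂ) i) ^ d i := by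
    rw [h i, mul_pow, ← pow_mul, mul_comm (ω i), hds i, pow_mul, hτ]
  choose g hg hz' using fun i => exists_pow_eq_one_mul_of_pow_eq_pow (hd i) (hpow i)
  have hτ1 : ‖τ‖ = 1 := by
    have hsum : weightedNormSq ω z ‖τ‖ = 1 := by
      refine (Finset.sum_congr rfl fun i _ => ?_).trans z'.2
      simp only [hz' i, norm_mul, Complex.norm_eq_one_of_pow_eq_one (hg i) (hd i), one_mul,
        norm_pow, Complex.norm_real, norm_norm]
    exact (strictMonoOn_weightedNormSq hω (sph_coe_ne_zero z)).injOn (norm_nonneg τ)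
      (mem_Ici.mpr zero_le_one) (hsum.trans (weightedNormSq_one ω z).symm)
  let z₁ : Sph m := ⟨fun i => τ ^ ω i * (z : Fin m → ℂ) i, by simpa [norm_mul, hτ1] using z.2⟩
  exact ⟨g, hg, z₁, z', Quot.sound ⟨τ, hτ1, fun i => rfl⟩, rfl, hz'⟩

end Fibres

instance (m : ℕ) : CompactSpace (Sph m) := by
  refine isCompact_iff_compactSpace.mp (Metric.isCompact_of_isClosed_isBounded ?_ ?_)
  · exact isClosed_eq (by fun_prop) continuous_const
  · refine (Metric.isBounded_closedBall (x := (0 : Fin m → ℂ)) (r := 1)).subset fun z hz => ?_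
    rw [mem_closedBall_zero_iff, pi_norm_le_iff_of_nonneg zero_le_one]
    intro i
    have : ‖z i‖ ^ 2 ≤ 1 := hz ▸ Finset.single_le_sum (f := fun j => ‖z j‖ ^ 2)
      (fun j _ => by positivity) (Finset.mem_univ i)
    exact (sq_le_one_iff₀ (norm_nonneg _)).mp this

section EMap

variable {χ ω : Fin m → ℕ} (hω : ∀ i, 1 ≤ ω i) (hχ : ∀ i, 1 ≤ χ i)
  {e : WP m ω → WP m χ} (he : IsEMap m χ ω e)
include hω hχ he

lemma IsEMap.surjective : Function.Surjective e := by
  rintro ⟨w⟩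
  obtain ⟨z, hz⟩ := exists_isNorm_powVec hω (dExp_ne_zero hω hχ) (dExp_mul hω) w
  exact ⟨wpMk m ω z, he.2 z w hz⟩

omit hω in
lemma IsEMap.apply_eq_of_orbRel {x y : WP m ω} (h : orbRel m ω (dExp m χ ω) x y) :
    e x = e y := by
  obtain ⟨g, hg, z, z', rfl, rfl, hz'⟩ := h
  have hpow : powVec m (dExp m χ ω) z' = powVec m (dExp m χ ω) z :=
    funext fun i => by rw [powVec, powVec, hz' i, mul_pow, hg i, one_mul]
  obtain ⟨w, hw⟩ := exists_isNorm hχ (powVec_ne_zero (dExp m χ ω) z)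
  rw [he.2 z w hw, he.2 z' w (hpow ▸ hw)]

lemma IsEMap.orbRel_of_apply_eq {x y : WP m ω} (h : e x = e y) :
    orbRel m ω (dExp m χ ω) x y := by
  induction x using Quot.ind with | mk z => ?_
  induction y using Quot.ind with | mk z' => ?_
  obtain ⟨w, hw⟩ := exists_isNorm hχ (powVec_ne_zero (dExp m χ ω) z)
  obtain ⟨w', hw'⟩ := exists_isNorm hχ (powVec_ne_zero (dExp m χ ω) z')
  have hww' : wRel m χ w w' :=
    wpMk_eq_iff.mp <| (he.2 z w hw).symm.trans (h.trans (he.2 z' w' hw'))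
  obtain ⟨u, hpow⟩ := exists_pow_eq_of_isNorm_of_wRel hw hw' hww'
  exact orbRel_of_pow_eq hω (dExp_ne_zero hω hχ) (sVal_pos_and_dvd hω).1.ne' (dExp_mul hω) hpow

lemma IsEMap.isQuotientMap : IsQuotientMap e := by
  obtain ⟨φ, hφ, hφn⟩ := exists_continuous_isNorm_powVec hχ (dExp m χ ω)
  have hφs : Function.Surjective φ := fun w =>
    let ⟨z, hz⟩ := exists_isNorm_powVec hω (dExp_ne_zero hω hχ) (dExp_mul hω) w
    ⟨z, IsNorm.unique hχ (powVec_ne_zero _ z) (hφn z) hz⟩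
  have hcomp : e ∘ Quot.mk _ = Quot.mk _ ∘ φ := funext fun z => he.2 z (φ z) (hφn z)
  refine IsQuotientMap.of_comp continuous_quot_mk he.1 ?_
  rw [hcomp]
  exact isQuotientMap_quot_mk.comp (hφ.isClosedMap.isQuotientMap hφ hφs)

end EMap

end WeightedProjective

lemma Topology.IsQuotientMap.exists_homeomorph_quot {X Y : Type*} [TopologicalSpace X]
    [TopologicalSpace Y] {e : X → Y} {r : X → X → Prop} (he : IsQuotientMap e)
    (hr : ∀ x y, e x = e y ↔ r x y) : ∃ F : Quot r ≃ₜ Y, ∀ x, F (Quot.mk _ x) = e x := by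
  let F : Quot r → Y := Quot.lift e fun x y h => (hr x y).mpr h
  have hF : IsHomeomorph F := by
    refine isHomeomorph_iff_isQuotientMap_injective.mpr
      ⟨IsQuotientMap.of_comp continuous_quot_mk (continuous_quot_lift _ he.continuous) he, ?_⟩
    rintro ⟨x⟩ ⟨y⟩ h
    exact Quot.sound ((hr x y).mp h)
  exact ⟨hF.homeomorph F, fun x => rfl⟩

open WeightedProjective in
theorem statement1_general (n : ℕ) (ω χ : Fin (n + 1) → ℕ)
    (hω : ∀ i, 1 ≤ ω i) (hχ : ∀ i, 1 ≤ χ i)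
    (e : WP (n + 1) ω → WP (n + 1) χ) (he : IsEMap (n + 1) χ ω e) :
    Function.Surjective e ∧
    (∀ x y : WP (n + 1) ω, e x = e y ↔ orbRel (n + 1) ω (dExp (n + 1) χ ω) x y) ∧
    ∃ F : Quot (orbRel (n + 1) ω (dExp (n + 1) χ ω)) ≃ₜ WP (n + 1) χ,
      ∀ x : WP (n + 1) ω, F (Quot.mk _ x) = e x := by
  have hfib (x y : WP (n + 1) ω) : e x = e y ↔ orbRel (n + 1) ω (dExp (n + 1) χ ω) x y :=
    ⟨he.orbRel_of_apply_eq hω hχ, he.apply_eq_of_orbRel hχ⟩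
  exact ⟨he.surjective hω hχ, hfib, (he.isQuotientMap hω hχ).exists_homeomorph_quot hfib⟩

/-- The map `e(χ/ω) : P(ω) → P(χ)` is surjective; two points have the same
image iff they lie in the same orbit of `C_{χ/ω} = ∏_i μ_{d_i}`; and `e(χ/ω)` induces a
homeomorphism `P(ω)/C_{χ/ω} ≅ P(χ)`. -/
theorem statement1 (n : ℕ) (hn : 1 ≤ n) (ω χ : Fin (n + 1) → ℕ)
    (hω : ∀ i, 1 ≤ ω i) (hχ : ∀ i, 1 ≤ χ i)
    (e : WP (n + 1) ω → WP (n + 1) χ) (he : IsEMap (n + 1) χ ω e) :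
    Function.Surjective e ∧
    (∀ x y : WP (n + 1) ω, e x = e y ↔ orbRel (n + 1) ω (dExp (n + 1) χ ω) x y) ∧
    ∃ F : Quot (orbRel (n + 1) ω (dExp (n + 1) χ ω)) ≃ₜ WP (n + 1) χ,
      ∀ x : WP (n + 1) ω, F (Quot.mk _ x) = e x :=
  statement1_general n ω χ hω hχ e he
end
end
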